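/- Let g be a finite-dimensional semisimple Lie algebra over C with a good Z-grading g = ⊕_{j∈Z} g_j for e ∈ g_2 (i.e., ad(e): g_j → g_{j+2} injective for j ≤ -1 and surjective for j ≥ -1). Then dim g_e = dim g_0 + dim g_1, where g_e is the centralizer of e. -/

import Mathlib

/-!
`ad e` is homogeneous of degree 2, so its kernel is a graded subspace; by injectivity in degrees
`≤ -1` it lies in `P = ⊕_{j ≥ -1} g_j`. By surjectivity `ad e` maps `P` onto `S = ⊕_{j ≥ 1} g_j`,
whence `dim g_e = dim P - dim S = dim g_{-1} + dim g_0`, and `ad e : g_{-1} → g_1` is an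
isomorphism.
-/

open Module Set Submodule

theorem Submodule.finrank_map_add_finrank_inf_ker {K M N : Type*} [DivisionRing K]
    [AddCommGroup M] [Module K M] [AddCommGroup N] [Module K N]
    (f : M →ₗ[K] N) (P : Submodule K M) [FiniteDimensional K P] :
    finrank K (P.map f) + finrank K ↥(P ⊓ LinearMap.ker f) = finrank K P := by
  rw [← f.range_domRestrict, ← map_comap_subtype, finrank_map_subtype_eq, ← f.ker_domRestrict]
  exact (f.domRestrict P).finrank_range_add_finrank_ker

theorem iSupIndep.finrank_biSup_Ici {K M : Type*} [DivisionRing K] [AddCommGroup M] [Module K M]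
    [FiniteDimensional K M] {V : ℤ → Submodule K M} (hV : iSupIndep V) (k : ℤ) :
    finrank K ↥(⨆ j ∈ Ici k, V j) = finrank K (V k) + finrank K ↥(⨆ j ∈ Ici (k + 1), V j) := by
  have hdisj : Disjoint (V k) (⨆ j ∈ Ici (k + 1), V j) := hV.disjoint_biSup (by simp)
  rw [← Ioi_insert, iSup_insert, ← Ici_add_one_eq_Ioi, ← finrank_sup_add_finrank_inf_eq,
    hdisj.eq_bot, finrank_bot, add_zero]

section Homogeneous

variable {R M : Type*} [Ring R] [AddCommGroup M] [Module R M] {V : ℤ → Submodule R M}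
  {f : M →ₗ[R] M} {d : ℤ}

theorem DFinsupp.lsum_comp_mapRange_restrict (hf : ∀ j, ∀ x ∈ V j, f x ∈ V (j + d)) :
    DFinsupp.lsum ℕ (fun j => (V (j + d)).subtype) ∘ₗ
        DFinsupp.mapRange.linearMap (fun j => f.restrict (hf j)) =
      f ∘ₗ DFinsupp.lsum ℕ (fun j => (V j).subtype) := by
  ext j x
  simp

theorem LinearMap.ker_le_iSup_inf_ker (hV : iSupIndep V) (hV_top : ⨆ j, V j = ⊤)
    (hf : ∀ j, ∀ x ∈ V j, f x ∈ V (j + d)) :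
    LinearMap.ker f ≤ ⨆ j, V j ⊓ LinearMap.ker f := by
  classical
  intro x hx
  obtain ⟨c, rfl⟩ := (mem_iSup_iff_exists_dfinsupp V x).mp (hV_top ▸ mem_top)
  -- the components `f (c j)` lie in the independent family `j ↦ V (j + d)` and sum to `f x = 0`
  have hfc : DFinsupp.mapRange.linearMap (fun j => f.restrict (hf j)) c = 0 := by
    refine (hV.comp (add_left_injective d)).dfinsupp_lsum_injective ?_
    rw [map_zero]
    exact (LinearMap.congr_fun (DFinsupp.lsum_comp_mapRange_restrict hf) c).trans hx
  have hc (j : ℤ) : f (c j) = 0 := by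
    simpa using congr((($hfc j : V (j + d)) : M))
  rw [DFinsupp.lsum_apply_apply, DFinsupp.sumAddHom_apply]
  exact _root_.dfinsuppSum_mem _ _ _ fun j _ => mem_iSup_of_mem j ⟨(c j).2, hc j⟩

theorem LinearMap.ker_le_biSup_Ici (hV : iSupIndep V) (hV_top : ⨆ j, V j = ⊤)
    (hf : ∀ j, ∀ x ∈ V j, f x ∈ V (j + d)) {k : ℤ} (hinj : ∀ j < k, V j ⊓ LinearMap.ker f = ⊥) :
    LinearMap.ker f ≤ ⨆ j ∈ Ici k, V j := by
  refine (LinearMap.ker_le_iSup_inf_ker hV hV_top hf).trans <| iSup_le fun j => ?_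
  by_cases hj : k ≤ j
  · exact inf_le_left.trans (le_biSup V hj)
  · rw [hinj j (not_le.mp hj)]
    exact bot_le

theorem Submodule.map_biSup_Ici {k : ℤ} (hsurj : ∀ j ∈ Ici k, (V j).map f = V (j + d)) :
    (⨆ j ∈ Ici k, V j).map f = ⨆ j ∈ Ici (k + d), V j := by
  simp_rw [Submodule.map_iSup]
  rw [biSup_congr hsurj, ← image_add_const_Ici, iSup_image]

end Homogeneous

theorem finrank_centralizer_good_grading_general
    (L : Type*) [LieRing L] [LieAlgebra ℂ L]
    [Module.Finite ℂ L]
    (V : ℤ → Submodule ℂ L)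
    (hdecomp : DirectSum.IsInternal V)
    (hbracket : ∀ i j : ℤ, ∀ x ∈ V i, ∀ y ∈ V j, ⁅x, y⁆ ∈ V (i + j))
    (e : L) (he : e ∈ V 2)
    (hinj : ∀ j : ℤ, j ≤ -1 → ∀ x ∈ V j, ⁅e, x⁆ = 0 → x = 0)
    (hsurj : ∀ j : ℤ, -1 ≤ j → ∀ y ∈ V (j + 2), ∃ x ∈ V j, ⁅e, x⁆ = y) :
    Module.finrank ℂ (LinearMap.ker (LieAlgebra.ad ℂ L e)) =
      Module.finrank ℂ (V 0) + Module.finrank ℂ (V 1) := by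
  set f := LieAlgebra.ad ℂ L e
  have hV := hdecomp.submodule_iSupIndep
  have hf (j : ℤ) : ∀ x ∈ V j, f x ∈ V (j + 2) := fun x hx => by
    simpa [f, add_comm] using hbracket 2 j e he x hx
  have hmap : ∀ j ∈ Ici (-1 : ℤ), (V j).map f = V (j + 2) := fun j hj =>
    le_antisymm (map_le_iff_le_comap.mpr (hf j)) fun y hy => by
      obtain ⟨x, hx, rfl⟩ := hsurj j hj y hy
      exact mem_map_of_mem hx
  have hker_bot (j : ℤ) (hj : j ≤ -1) : V j ⊓ LinearMap.ker f = ⊥ :=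
    (Submodule.eq_bot_iff _).mpr fun x ⟨hx, hx0⟩ => hinj j hj x hx hx0
  have hker : LinearMap.ker f ≤ ⨆ j ∈ Ici (-1), V j :=
    LinearMap.ker_le_biSup_Ici hV hdecomp.submodule_iSup_eq_top hf fun j hj => hker_bot j hj.le
  have h_rank_nullity : finrank ℂ ↥(⨆ j ∈ Ici 1, V j) + finrank ℂ (LinearMap.ker f) =
      finrank ℂ ↥(⨆ j ∈ Ici (-1), V j) := by
    have := finrank_map_add_finrank_inf_ker f (⨆ j ∈ Ici (-1), V j)
    rwa [map_biSup_Ici hmap, inf_eq_right.mpr hker] at this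
  have h_iso : finrank ℂ (V 1) = finrank ℂ (V (-1)) := by
    have := finrank_map_add_finrank_inf_ker f (V (-1))
    rwa [hmap (-1) (mem_Ici.mpr le_rfl), hker_bot (-1) le_rfl, finrank_bot, add_zero] at this
  have h_split : finrank ℂ ↥(⨆ j ∈ Ici (-1), V j) =
      finrank ℂ (V (-1)) + finrank ℂ (V 0) + finrank ℂ ↥(⨆ j ∈ Ici 1, V j) := by
    rw [hV.finrank_biSup_Ici (-1), hV.finrank_biSup_Ici (-1 + 1), ← add_assoc]
    rfl
  omega

/-- For a good ℤ-grading of a finite-dimensional semisimple complex Lie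
algebra for `e ∈ g₂`, the centralizer `g_e` satisfies
`dim g_e = dim g₀ + dim g₁`. -/
theorem finrank_centralizer_good_grading
    (L : Type*) [LieRing L] [LieAlgebra ℂ L]
    [Module.Finite ℂ L] [LieAlgebra.IsSemisimple ℂ L]
    (V : ℤ → Submodule ℂ L)
    (hdecomp : DirectSum.IsInternal V)
    (hbracket : ∀ i j : ℤ, ∀ x ∈ V i, ∀ y ∈ V j, ⁅x, y⁆ ∈ V (i + j))
    (e : L) (he : e ∈ V 2)
    (hinj : ∀ j : ℤ, j ≤ -1 → ∀ x ∈ V j, ⁅e, x⁆ = 0 → x = 0)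
    (hsurj : ∀ j : ℤ, -1 ≤ j → ∀ y ∈ V (j + 2), ∃ x ∈ V j, ⁅e, x⁆ = y) :
    Module.finrank ℂ (LinearMap.ker (LieAlgebra.ad ℂ L e)) =
      Module.finrank ℂ (V 0) + Module.finrank ℂ (V 1) :=
  finrank_centralizer_good_grading_general L V hdecomp hbracket e he hinj hsurj
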